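/- Let F be a graph with chromatic number χ(F) ≥ 3 such that σ(F) = ∞, let k ≥ 2 and n ≥ 9(k²+k+1)+2v(F). Let G be a {kP₃, F}-free graph on n vertices with e(G) = ex(n,{kP₃,F}), and let A ⊆ V(G) be a set of k−1 vertices each of degree at least n/9 in G. Then every vertex of V(G)∖A is adjacent to all vertices of A, and the number of edges of the induced subgraph G[V(G)∖A] equals ⌊(n−k+1)/2⌋. -/

import Mathlib

/-!
Let `q = |Aᶜ| = n - k + 1`. Since the vertices of `A` have large degree, a cherry `x - u - y` in
`G - A` could be completed greedily, by `k - 1` disjoint cherries centred at `A`, to a copy of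
`kP₃`; so `G - A` is a matching and has at most `⌊q/2⌋` edges.

Join `A` completely to `Aᶜ`, put a matching `M` of `⌊q/2⌋` edges on `Aᶜ`, and put either no
edges or those of `G` inside `A`. Every `P₃` of such a graph meets `A`, so it is `kP₃`-free.
With `A` independent, any copy of `F` in it lies in a copy of some `I_{v(F)} + M_m`, which is
`F`-free as `σ(F) = ∞`; extremality gives `e(G) ≥ (k-1)q + ⌊q/2⌋`. Each edge of
`G - A` with an endpoint missing some `a ∈ A` can be charged to that missing `A`–`Aᶜ` edge, so
at least `v(F)` edges of `G - A` are joined completely to `A`. Rerouting the edges of `M` used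
by a copy of `F` onto these shows that `G[A] + M` is `F`-free too, and
`e(G) ≥ e(G[A]) + (k-1)q + ⌊q/2⌋` then forces all `A`–`Aᶜ` edges and `⌊q/2⌋` edges in `G - A`.
-/

open SimpleGraph

/-- `G` contains a (not necessarily induced) subgraph copy of `H`. -/
def GContains {V W : Type*} (G : SimpleGraph V) (H : SimpleGraph W) : Prop :=
  ∃ f : W ↪ V, ∀ a b, H.Adj a b → G.Adj (f a) (f b)

/-- The number of edges of a graph. -/
noncomputable def eCount {V : Type*} (G : SimpleGraph V) : ℕ := G.edgeSet.ncard

/-- The Turán number of a "freeness" predicate `P` : the maximum number of edges of a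
graph on `n` vertices satisfying `P`. -/
noncomputable def exNum (n : ℕ) (P : SimpleGraph (Fin n) → Prop) : ℕ :=
  sSup {m | ∃ G : SimpleGraph (Fin n), P G ∧ eCount G = m}

/-- The disjoint union of `k` copies of the path on `ℓ` vertices. -/
def kPaths (k ℓ : ℕ) : SimpleGraph (Fin k × Fin ℓ) where
  Adj x y := x.1 = y.1 ∧ ((x.2 : ℕ) + 1 = (y.2 : ℕ) ∨ (y.2 : ℕ) + 1 = (x.2 : ℕ))
  symm := ⟨fun x y h => ⟨h.1.symm, h.2.symm⟩⟩
  loopless := ⟨fun x h => by obtain ⟨-, h⟩ := h; omega⟩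

/-- The linear forest with one path on `len i` vertices for each `i ∈ s`. -/
def linearForest (s : Finset ℕ) (len : ℕ → ℕ) :
    SimpleGraph {p : ℕ × ℕ // p.1 ∈ s ∧ p.2 < len p.1} where
  Adj x y := x.val.1 = y.val.1 ∧ (x.val.2 + 1 = y.val.2 ∨ y.val.2 + 1 = x.val.2)
  symm := ⟨fun x y h => ⟨h.1.symm, h.2.symm⟩⟩
  loopless := ⟨fun x h => by obtain ⟨-, h⟩ := h; omega⟩

/-- The join `I_a + M_m` of an independent set of `a` vertices with a perfect matching
on `2m` vertices (vertices `2t` and `2t+1` are matched). -/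
def joinIM (a m : ℕ) : SimpleGraph (Fin a ⊕ Fin (2 * m)) where
  Adj x y :=
    match x, y with
    | Sum.inl _, Sum.inr _ => True
    | Sum.inr _, Sum.inl _ => True
    | Sum.inl _, Sum.inl _ => False
    | Sum.inr i, Sum.inr j => i ≠ j ∧ (i : ℕ) / 2 = (j : ℕ) / 2
  symm := by
    constructor
    rintro (x | x) (y | y) h
    · exact h.elim
    · trivial
    · trivial
    · exact ⟨h.1.symm, h.2.symm⟩
  loopless := by
    constructor
    rintro (x | x) h
    · exact h
    · exact h.1 rfl

/-- `E'` is an edge control set of `F`: a set of edges of `F` such that every other edge of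
`F` shares an endpoint with some edge of `E'`. -/
def IsEdgeControlSet {V : Type*} (F : SimpleGraph V) (E' : Finset (Sym2 V)) : Prop :=
  (E' : Set (Sym2 V)) ⊆ F.edgeSet ∧
    ∀ e ∈ F.edgeSet, e ∉ E' → ∃ e' ∈ E', ∃ v, v ∈ e ∧ v ∈ e'

/-- The edge control number `β₁(F)`: the minimum size of an edge control set of `F`. -/
noncomputable def edgeControlNumber {V : Type*} (F : SimpleGraph V) : ℕ :=
  sInf {m | ∃ E' : Finset (Sym2 V), IsEdgeControlSet F E' ∧ E'.card = m}

/-- The number of triangles (copies of `K₃`) in `F`. -/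
noncomputable def triCount {V : Type*} (F : SimpleGraph V) : ℕ :=
  {t : Finset V | F.IsNClique 3 t}.ncard

/-- `G` contains no member of the family `𝒢₁(F) = {F[V(F) ∖ S] : S ⊆ V(F), F[S] edgeless}`. -/
def G1FamFree {VF V : Type*} (F : SimpleGraph VF) (G : SimpleGraph V) : Prop :=
  ∀ S : Set VF, (∀ a ∈ S, ∀ b ∈ S, ¬ F.Adj a b) → ¬ GContains G (F.induce Sᶜ)

/-- `G` contains no member of the family `𝒢₂(F) = {F[V(F) ∖ S] : S ⊆ V(F), e(F[S]) ≤ 1}`. -/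
def G2FamFree {VF V : Type*} (F : SimpleGraph VF) (G : SimpleGraph V) : Prop :=
  ∀ S : Set VF, eCount (F.induce S) ≤ 1 → ¬ GContains G (F.induce Sᶜ)

/-- `G` contains no member of the family
`𝓗ᵢ(F) = {F[V(F) ∖ S] : S ⊆ V(F), Δ(F[S]) ≤ 1, e(F[S]) ≤ i}`. -/
def HiFamFree {VF V : Type*} (F : SimpleGraph VF) (i : ℕ) (G : SimpleGraph V) : Prop :=
  ∀ S : Set VF, (∀ v ∈ S, (F.neighborSet v ∩ S).ncard ≤ 1) →
    eCount (F.induce S) ≤ i → ¬ GContains G (F.induce Sᶜ)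

/-- `G` contains no member of the family `𝓗(F) = {F[V(F) ∖ S] : S ⊆ V(F), Δ(F[S]) ≤ 1}`. -/
def HFamFree {VF V : Type*} (F : SimpleGraph VF) (G : SimpleGraph V) : Prop :=
  ∀ S : Set VF, (∀ v ∈ S, (F.neighborSet v ∩ S).ncard ≤ 1) →
    ¬ GContains G (F.induce Sᶜ)

/-- The common neighborhood of `S` outside `S`. -/
def commonNbhd {V : Type*} (G : SimpleGraph V) (S : Set V) : Set V :=
  {v | v ∉ S ∧ ∀ u ∈ S, G.Adj v u}

/-- The quantity `n_k = (n/3 − C(ℓ,2)) / ((⌈ℓ/2⌉+1)·C(ℓ,⌊ℓ/2⌋)) + kℓ`. -/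
noncomputable def nkQ (n k ℓ : ℕ) : ℚ :=
  ((n : ℚ) / 3 - (ℓ.choose 2 : ℚ)) /
    ((((ℓ + 1) / 2 + 1 : ℕ) : ℚ) * (ℓ.choose (ℓ / 2) : ℚ)) + (k : ℚ) * (ℓ : ℚ)

/-- The set of vertices belonging to some `⌊ℓ/2⌋`-set whose common neighborhood outside it
has size at least `n_k`. -/
def bigA (n k ℓ : ℕ) (G : SimpleGraph (Fin n)) : Set (Fin n) :=
  {v | ∃ S : Finset (Fin n), v ∈ S ∧ S.card = ℓ / 2 ∧
    nkQ n k ℓ ≤ ((commonNbhd G ↑S).ncard : ℚ)}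

open Finset

section

variable {V : Type*}

lemma gContains_iff_isContained {W : Type*} {G : SimpleGraph V} {H : SimpleGraph W} :
    GContains G H ↔ H ⊑ G :=
  ⟨fun ⟨f, hf⟩ => ⟨⟨⟨f, hf _ _⟩, f.injective⟩⟩,
    fun ⟨f⟩ => ⟨f.toEmbedding, fun _ _ h => f.toHom.map_adj h⟩⟩

lemma eCount_eq_card_edgeFinset (G : SimpleGraph V) [Fintype G.edgeSet] :
    eCount G = #G.edgeFinset :=
  Set.ncard_eq_toFinset_card' _

@[simp]
lemma eCount_bot : eCount (⊥ : SimpleGraph V) = 0 := by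
  simp [eCount]

lemma eCount_congr {W : Type*} {G : SimpleGraph V} {H : SimpleGraph W} (e : G ≃g H) :
    eCount G = eCount H := by
  simp only [eCount, ← Nat.card_coe_set_eq]
  exact Nat.card_congr e.mapEdgeSet

lemma eCount_le_exNum {n : ℕ} {P : SimpleGraph (Fin n) → Prop} {G : SimpleGraph (Fin n)}
    (hG : P G) : eCount G ≤ exNum n P :=
  le_csSup ⟨Nat.card (Sym2 (Fin n)), by rintro _ ⟨H, -, rfl⟩; exact Set.ncard_le_card _⟩
    ⟨G, hG, rfl⟩

lemma eCount_induce_le_sq (G : SimpleGraph V) (s : Finset V) : eCount (G.induce ↑s) ≤ #s ^ 2 := by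
  classical
  calc eCount (G.induce ↑s) = #(G.induce ↑s).edgeFinset := eCount_eq_card_edgeFinset _
    _ ≤ (Fintype.card ↑s).choose 2 := card_edgeFinset_le_card_choose_two
    _ ≤ #s ^ 2 := by simpa using Nat.choose_le_pow _ 2

section Counting

variable [Fintype V] [DecidableEq V]

lemma eCount_induce_eq_card_inter_sym2 (G : SimpleGraph V) [DecidableRel G.Adj] (s : Finset V) :
    eCount (G.induce ↑s) = #(G.edgeFinset ∩ s.sym2) := by
  classical
  rw [eCount_eq_card_edgeFinset, ← filter_edgeFinset_toFinset_subset]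
  convert (card_filter_edgeFinset_toFinset_subset s).symm

lemma card_edges_across_eq_card_interedges (G : SimpleGraph V) [DecidableRel G.Adj]
    (s : Finset V) :
    #{e ∈ G.edgeFinset | e ∉ s.sym2 ∧ e ∉ sᶜ.sym2} = #(G.interedges s sᶜ) := by
  symm
  refine card_bij (fun p _ => s(p.1, p.2)) ?_ ?_ ?_
  · rintro ⟨a, b⟩ h
    rw [mem_interedges_iff, mem_compl] at h
    simp [h.2.2, h.1, h.2.1]
  · rintro ⟨a, b⟩ h ⟨a', b'⟩ h' he
    rw [mem_interedges_iff, mem_compl] at h h'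
    rcases Sym2.eq_iff.1 he with ⟨rfl, rfl⟩ | ⟨rfl, rfl⟩
    · rfl
    · exact absurd h.1 h'.2.1
  · intro e he
    induction e using Sym2.ind with
    | _ x y =>
    simp only [mem_filter, mem_edgeFinset, mem_edgeSet, mk_mem_sym2_iff, mem_compl] at he
    obtain ⟨hxy, hin, hout⟩ := he
    by_cases hx : x ∈ s
    · exact ⟨(x, y), by simp_all [mem_interedges_iff], rfl⟩
    · exact ⟨(y, x), by simp_all [mem_interedges_iff, hxy.symm], Sym2.eq_swap⟩

lemma eCount_eq_induce_add_interedges_add_induce (G : SimpleGraph V) [DecidableRel G.Adj]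
    (s : Finset V) :
    eCount G = eCount (G.induce ↑s) + #(G.interedges s sᶜ) + eCount (G.induce ↑sᶜ) := by
  rw [eCount_eq_card_edgeFinset, eCount_induce_eq_card_inter_sym2,
    eCount_induce_eq_card_inter_sym2, ← card_edges_across_eq_card_interedges,
    ← filter_mem_eq_inter, ← filter_mem_eq_inter]
  have hdisj : ∀ e : Sym2 V, e ∈ s.sym2 → e ∉ sᶜ.sym2 := by
    intro e hs hsc
    induction e using Sym2.ind with
    | _ x y => simp_all
  have hout : {e ∈ {e ∈ G.edgeFinset | e ∉ s.sym2} | e ∈ sᶜ.sym2} =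
      {e ∈ G.edgeFinset | e ∈ sᶜ.sym2} := by
    ext e
    simp only [mem_filter]
    exact ⟨fun h => ⟨h.1.1, h.2⟩, fun h => ⟨⟨h.1, fun hs => hdisj e hs h.2⟩, h.2⟩⟩
  rw [← card_filter_add_card_filter_not (s := G.edgeFinset) (p := (· ∈ s.sym2)),
    ← card_filter_add_card_filter_not (s := {e ∈ G.edgeFinset | e ∉ s.sym2})
      (p := (· ∈ sᶜ.sym2)), hout, filter_filter]
  ring

end Counting

/-- `Δ(G - A) ≤ 1`. -/
def IsMatchingOff (G : SimpleGraph V) (A : Finset V) : Prop :=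
  ∀ ⦃u x y : V⦄, u ∉ A → x ∉ A → y ∉ A → G.Adj u x → G.Adj u y → x = y

lemma IsMatchingOff.eq_of_mem_of_mem {G : SimpleGraph V} {A : Finset V} [Fintype V]
    [DecidableEq V] (hG : IsMatchingOff G A) {e e' : Sym2 V} (he : e ∈ G.edgeSet)
    (he' : e' ∈ G.edgeSet) (hA : e ∈ Aᶜ.sym2) (hA' : e' ∈ Aᶜ.sym2) {v : V} (hv : v ∈ e)
    (hv' : v ∈ e') : e = e' := by
  obtain ⟨x, rfl⟩ := Sym2.mem_iff_exists.1 hv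
  obtain ⟨y, rfl⟩ := Sym2.mem_iff_exists.1 hv'
  rw [mk_mem_sym2_iff, mem_compl, mem_compl] at hA hA'
  rw [hG hA.1 hA.2 hA'.2 he he']

lemma kPaths_adj_left {k : ℕ} (i : Fin k) : (kPaths k 3).Adj (i, 1) (i, 0) :=
  ⟨rfl, Or.inr rfl⟩

lemma kPaths_adj_right {k : ℕ} (i : Fin k) : (kPaths k 3).Adj (i, 1) (i, 2) :=
  ⟨rfl, Or.inl rfl⟩

/-- Each path of a copy of `kP₃` has a vertex in `A`, and these are distinct. -/
lemma kPaths_free_of_isMatchingOff {G : SimpleGraph V} {A : Finset V} {k : ℕ}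
    (hG : IsMatchingOff G A) (hk : #A < k) : ¬ kPaths k 3 ⊑ G := by
  rintro ⟨f⟩
  have hmeet : ∀ i, ∃ t, f (i, t) ∈ A := by
    intro i
    by_contra! h
    have := f.injective (hG (h 1) (h 0) (h 2) (f.toHom.map_adj (kPaths_adj_left i))
      (f.toHom.map_adj (kPaths_adj_right i)))
    simp at this
  choose t ht using hmeet
  have : #(univ : Finset (Fin k)) ≤ #A :=
    card_le_card_of_injOn (fun i => f (i, t i)) (fun i _ => ht i)
      (fun i _ j _ h => congrArg Prod.fst (f.injective h))
  simp at this
  omega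

lemma exists_copy_kPaths_succ {G : SimpleGraph V} {j : ℕ} (f : Copy (kPaths j 3) G)
    {x u y : V} (hux : G.Adj u x) (huy : G.Adj u y) (hxy : x ≠ y) (hx : x ∉ Set.range f)
    (hu : u ∉ Set.range f) (hy : y ∉ Set.range f) :
    ∃ g : Copy (kPaths (j + 1) 3) G, Set.range g ⊆ {x, u, y} ∪ Set.range f := by
  set path : Fin 3 → V := ![x, u, y]
  have hpath : Function.Injective path := by
    intro s t h
    fin_cases s <;> fin_cases t <;> simp_all [path, hux.ne, huy.ne, hux.ne.symm, huy.ne.symm]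
  have hpath_range : ∀ t, path t ∉ Set.range f := by
    intro t; fin_cases t <;> assumption
  let g : Fin (j + 1) × Fin 3 → V := fun p => Fin.lastCases (path p.2) (fun i => f (i, p.2)) p.1
  have hg_last : ∀ t, g (Fin.last j, t) = path t := fun _ => Fin.lastCases_last
  have hg_cast : ∀ i t, g (i.castSucc, t) = f (i, t) := fun _ _ => Fin.lastCases_castSucc _
  refine ⟨⟨⟨g, ?_⟩, ?_⟩, ?_⟩
  · rintro ⟨i, s⟩ ⟨i', t⟩ ⟨rfl, hst⟩
    induction i using Fin.lastCases with
    | last =>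
      simp only [hg_last]
      fin_cases s <;> fin_cases t <;> simp_all [path, hux.symm, huy.symm]
    | cast i =>
      simp only [hg_cast]
      exact f.toHom.map_adj ⟨rfl, hst⟩
  · rintro ⟨i, s⟩ ⟨i', t⟩ (h : g (i, s) = g (i', t))
    induction i using Fin.lastCases <;> induction i' using Fin.lastCases <;>
      simp only [hg_last, hg_cast] at h
    · rw [hpath h]
    · exact absurd ⟨_, h.symm⟩ (hpath_range s)
    · exact absurd ⟨_, h⟩ (hpath_range t)
    · cases f.injective h; rfl
  · rintro _ ⟨⟨i, t⟩, rfl⟩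
    change g (i, t) ∈ _
    induction i using Fin.lastCases with
    | last => rw [hg_last]; fin_cases t <;> simp [path]
    | cast i => exact Or.inr ⟨(i, t), (hg_cast i t).symm⟩

lemma exists_ne_adj_adj_notMem [Fintype V] [DecidableEq V] {G : SimpleGraph V}
    [DecidableRel G.Adj] {c : V} {B : Finset V} (h : #B + 2 ≤ G.degree c) :
    ∃ w w', w ≠ w' ∧ G.Adj c w ∧ G.Adj c w' ∧ w ∉ B ∧ w' ∉ B := by
  have := le_card_sdiff B (G.neighborFinset c)
  rw [card_neighborFinset_eq_degree] at this
  obtain ⟨w, hw, w', hw', hne⟩ := one_lt_card.1 (by omega : 1 < #(G.neighborFinset c \ B))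
  rw [mem_sdiff, mem_neighborFinset] at hw hw'
  exact ⟨w, w', hne, hw.1, hw'.1, hw.2, hw'.2⟩

/-- A cherry `x - u - y` outside `A` extends, one vertex `a ∈ A` at a time, by a cherry centred
at `a` whose leaves avoid `A` and everything chosen so far; the degree bound leaves room. -/
lemma isMatchingOff_of_kPaths_free [Fintype V] [DecidableEq V] {G : SimpleGraph V}
    [DecidableRel G.Adj] {A : Finset V} (hdeg : ∀ a ∈ A, 4 * #A + 2 ≤ G.degree a)
    (hfree : ¬ kPaths (#A + 1) 3 ⊑ G) : IsMatchingOff G A := by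
  intro u x y hu hx hy hux huy
  by_contra hxy
  suffices ∀ C ⊆ A, ∃ f : Copy (kPaths (#C + 1) 3) G, ∀ p, f p ∈ A → f p ∈ C from
    hfree ⟨(this A subset_rfl).choose⟩
  intro C
  induction C using Finset.induction_on with
  | empty =>
    intro _
    obtain ⟨g, hg⟩ := exists_copy_kPaths_succ
      (IsContained.of_isEmpty (A := kPaths 0 3) (B := G)).some hux huy hxy
      (by simp) (by simp) (by simp)
    rw [card_empty]
    refine ⟨g, fun p hp => ?_⟩
    rcases hg ⟨p, rfl⟩ with (h | h | h) | ⟨⟨i, _⟩, _⟩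
    · exact absurd (h ▸ hp) hx
    · exact absurd (h ▸ hp) hu
    · exact absurd (h ▸ hp) hy
    · exact i.elim0
  | insert c C hc ih =>
    intro hCA
    obtain ⟨f, hfA⟩ := ih ((subset_insert c C).trans hCA)
    have hcA : c ∈ A := hCA (mem_insert_self c C)
    have hcf : c ∉ Set.range f := by
      rintro ⟨p, hp⟩
      exact hc (hp ▸ hfA p (hp ▸ hcA))
    obtain ⟨w, w', hww', hw, hw', hwB, hw'B⟩ :=
      exists_ne_adj_adj_notMem (G := G) (B := A ∪ univ.image f) (c := c) <| by
        have : #C + 1 ≤ #A := card_insert_of_notMem hc ▸ card_le_card hCA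
        have : #(univ.image f) ≤ 3 * (#C + 1) := card_image_le.trans (by simp [mul_comm])
        have := card_union_le A (univ.image f)
        have := hdeg c hcA
        omega
    simp only [mem_union, mem_image, mem_univ, true_and, not_or, not_exists] at hwB hw'B
    obtain ⟨g, hg⟩ := exists_copy_kPaths_succ f hw hw' hww'
      (fun ⟨p, hp⟩ => hwB.2 p hp) hcf (fun ⟨p, hp⟩ => hw'B.2 p hp)
    rw [card_insert_of_notMem hc]
    refine ⟨g, fun p hp => ?_⟩
    rcases hg ⟨p, rfl⟩ with (h | h | h) | ⟨q, hq⟩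
    · exact absurd (h ▸ hp) hwB.1
    · exact h ▸ mem_insert_self c C
    · exact absurd (h ▸ hp) hw'B.1
    · exact mem_insert_of_mem (hq ▸ hfA q (hq ▸ hp))

def pairGraph (ℓ : V → ℕ) : SimpleGraph V where
  Adj v w := v ≠ w ∧ ℓ v / 2 = ℓ w / 2
  symm := ⟨fun _ _ h => ⟨h.1.symm, h.2.symm⟩⟩
  loopless := ⟨fun _ h => h.1 rfl⟩

@[simp]
lemma pairGraph_adj {ℓ : V → ℕ} {v w : V} :
    (pairGraph ℓ).Adj v w ↔ v ≠ w ∧ ℓ v / 2 = ℓ w / 2 :=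
  Iff.rfl

lemma eCount_pairGraph_val (q : ℕ) : eCount (pairGraph (fun i : Fin q => (i : ℕ))) = q / 2 := by
  classical
  rw [eCount_eq_card_edgeFinset, ← card_range (q / 2)]
  symm
  refine card_bij (fun t ht => s(⟨2 * t, ?_⟩, ⟨2 * t + 1, ?_⟩)) ?_ ?_ ?_
  · rw [mem_range] at ht; omega
  · rw [mem_range] at ht; omega
  · intro t _
    simp only [mem_edgeFinset, mem_edgeSet, pairGraph_adj, ne_eq, Fin.ext_iff]
    omega
  · intro t _ t' _ h
    rcases Sym2.eq_iff.1 h with ⟨h1, -⟩ | ⟨h1, -⟩ <;> simp only [Fin.mk.injEq] at h1 <;> omega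
  · intro e he
    induction e using Sym2.ind with
    | _ a b =>
    simp only [mem_edgeFinset, mem_edgeSet, pairGraph_adj, ne_eq, Fin.ext_iff] at he
    have := a.2
    have := b.2
    refine ⟨(a : ℕ) / 2, by rw [mem_range]; omega, ?_⟩
    rw [Sym2.eq_iff]
    simp only [Fin.ext_iff]
    omega

lemma exists_labelling_eCount_induce_pairGraph [DecidableEq V] (s : Finset V) :
    ∃ ℓ : V → ℕ, Set.InjOn ℓ ↑s ∧ (∀ v ∈ s, ℓ v < #s) ∧
      eCount ((pairGraph ℓ).induce ↑s) = #s / 2 := by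
  let e := s.equivFin
  let ℓ : V → ℕ := fun v => if h : v ∈ s then e ⟨v, h⟩ else 0
  have hℓ : ∀ v : s, ℓ v = e v := fun v => dif_pos v.2
  refine ⟨ℓ, fun v hv w hw h => ?_, fun v hv => ?_, ?_⟩
  · rw [hℓ ⟨v, hv⟩, hℓ ⟨w, hw⟩, Fin.val_inj] at h
    exact congrArg Subtype.val (e.injective h)
  · rw [hℓ ⟨v, hv⟩]; exact (e _).2
  · rw [← eCount_pairGraph_val]
    refine eCount_congr ⟨e, fun {v w} => ?_⟩
    simp only [comap_adj, Function.Embedding.subtype_apply, pairGraph_adj, hℓ, ne_eq,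
      e.injective.eq_iff, Subtype.ext_iff]

/-- `D` on `A`, `M` on `Aᶜ`, and every edge between `A` and `Aᶜ`. -/
def joinOn (A : Finset V) (D M : SimpleGraph V) : SimpleGraph V where
  Adj v w := v ≠ w ∧ (v ∈ A → w ∈ A → D.Adj v w) ∧ (v ∉ A → w ∉ A → M.Adj v w)
  symm := ⟨fun _ _ h =>
    ⟨h.1.symm, fun hw hv => (h.2.1 hv hw).symm, fun hw hv => (h.2.2 hv hw).symm⟩⟩
  loopless := ⟨fun _ h => h.1 rfl⟩

section joinOn

variable {A : Finset V} {D M : SimpleGraph V}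

@[simp]
lemma joinOn_adj {v w : V} :
    (joinOn A D M).Adj v w ↔
      v ≠ w ∧ (v ∈ A → w ∈ A → D.Adj v w) ∧ (v ∉ A → w ∉ A → M.Adj v w) :=
  Iff.rfl

variable (A D M)

lemma joinOn_induce_self : (joinOn A D M).induce ↑A = D.induce ↑A := by
  ext ⟨v, hv⟩ ⟨w, hw⟩
  simp only [comap_adj, Function.Embedding.subtype_apply, joinOn_adj]
  exact ⟨fun h => h.2.1 hv hw, fun h => ⟨h.ne, fun _ _ => h, fun h' => absurd hv h'⟩⟩

variable [Fintype V] [DecidableEq V]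

lemma joinOn_induce_compl : (joinOn A D M).induce ↑Aᶜ = M.induce ↑Aᶜ := by
  ext ⟨v, hv⟩ ⟨w, hw⟩
  rw [coe_compl, Set.mem_compl_iff, mem_coe] at hv hw
  simp only [comap_adj, Function.Embedding.subtype_apply, joinOn_adj]
  exact ⟨fun h => h.2.2 hv hw, fun h => ⟨h.ne, fun h' => absurd h' hv, fun _ _ => h⟩⟩

lemma eCount_joinOn :
    eCount (joinOn A D M) = eCount (D.induce ↑A) + #A * #Aᶜ + eCount (M.induce ↑Aᶜ) := by
  classical
  have hcross : (joinOn A D M).interedges A Aᶜ = A ×ˢ Aᶜ := by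
    refine filter_true_of_mem fun p hp => ?_
    rw [mem_product, mem_compl] at hp
    exact ⟨fun h => hp.2 (h ▸ hp.1), fun _ h => absurd h hp.2, fun h => absurd hp.1 h⟩
  rw [eCount_eq_induce_add_interedges_add_induce _ A, joinOn_induce_self, joinOn_induce_compl,
    hcross, card_product]

variable {A D}

lemma isMatchingOff_joinOn_pairGraph {ℓ : V → ℕ} (hℓ : Set.InjOn ℓ ↑Aᶜ) :
    IsMatchingOff (joinOn A D (pairGraph ℓ)) A := by
  intro u x y hu hx hy hux huy
  have hu' : u ∈ (↑Aᶜ : Set V) := by simpa using hu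
  have hx' : x ∈ (↑Aᶜ : Set V) := by simpa using hx
  have hy' : y ∈ (↑Aᶜ : Set V) := by simpa using hy
  obtain ⟨hux, hℓux⟩ := pairGraph_adj.1 (hux.2.2 hu hx)
  obtain ⟨huy, hℓuy⟩ := pairGraph_adj.1 (huy.2.2 hu hy)
  have : ℓ u ≠ ℓ x := fun h => hux (hℓ hu' hx' h)
  have : ℓ u ≠ ℓ y := fun h => huy (hℓ hu' hy' h)
  exact hℓ hx' hy' (by omega)

end joinOn

section Transfer

variable {VF : Type*} {F : SimpleGraph VF} {A : Finset V} {ℓ : V → ℕ}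

/-- Vertices of `F` mapped into `A` are relabelled by their own index in `VF`. -/
lemma isContained_joinIM_of_isContained_joinOn_bot [Fintype VF] [Fintype V] [DecidableEq V]
    {m : ℕ} (hℓ : Set.InjOn ℓ ↑Aᶜ) (hℓm : ∀ v ∉ A, ℓ v < 2 * m)
    (h : F ⊑ joinOn A ⊥ (pairGraph ℓ)) : F ⊑ joinIM (Fintype.card VF) m := by
  obtain ⟨f⟩ := h
  have hmem : ∀ v, f v ∉ A → f v ∈ (↑Aᶜ : Set V) := by simp
  let g : VF → Fin (Fintype.card VF) ⊕ Fin (2 * m) := fun v =>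
    if hv : f v ∈ A then .inl (Fintype.equivFin VF v) else .inr ⟨ℓ (f v), hℓm _ hv⟩
  refine ⟨⟨⟨g, fun {v w} hvw => ?_⟩, fun v w (hvw : g v = g w) => ?_⟩⟩
  · obtain ⟨hne, hA, hAc⟩ := joinOn_adj.1 (f.toHom.map_adj hvw)
    by_cases hv : f v ∈ A <;> by_cases hw : f w ∈ A <;> simp only [g, hv, hw, dite_true, dite_false]
    · exact (hA hv hw).elim
    · trivial
    · trivial
    · exact ⟨fun h => hne (hℓ (hmem v hv) (hmem w hw) (congrArg Fin.val h)), (hAc hv hw).2⟩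
  · by_cases hv : f v ∈ A <;> by_cases hw : f w ∈ A <;>
      simp only [g, hv, hw, dite_true, dite_false, Sum.inl.injEq, Sum.inr.injEq, reduceCtorEq,
        Fin.mk.injEq] at hvw
    · exact (Fintype.equivFin VF).injective hvw
    · exact f.injective (hℓ (hmem v hv) (hmem w hw) hvw)

/-- Each matched pair of labels used by a copy of `F` is redirected to its own edge
`τ (i, true) τ (i, false)` of `G`. -/
lemma isContained_of_isContained_joinOn_self [Fintype V] [DecidableEq V] {G : SimpleGraph V}
    (hℓ : Set.InjOn ℓ ↑Aᶜ) {τ : VF × Bool → V} (hτ : Function.Injective τ)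
    (hτadj : ∀ i, G.Adj (τ (i, true)) (τ (i, false)))
    (hτA : ∀ p, τ p ∉ A ∧ ∀ a ∈ A, G.Adj (τ p) a) (h : F ⊑ joinOn A G (pairGraph ℓ)) :
    F ⊑ G := by
  rcases isEmpty_or_nonempty VF with hVF | hVF
  · exact .of_isEmpty
  obtain ⟨f⟩ := h
  have hmem : ∀ v, f v ∉ A → f v ∈ (↑Aᶜ : Set V) := by simp
  let cls : VF → ℕ := fun v => ℓ (f v) / 2
  let rep : VF → VF := fun v => Function.invFun cls (cls v)
  have hrep : ∀ v, cls (rep v) = cls v := fun v => Function.invFun_eq ⟨v, rfl⟩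
  let g : VF → V := fun v => if f v ∈ A then f v else τ (rep v, decide (ℓ (f v) % 2 = 0))
  refine ⟨⟨⟨g, fun {v w} hvw => ?_⟩, fun v w (hvw : g v = g w) => ?_⟩⟩
  · obtain ⟨hne, hA, hAc⟩ := joinOn_adj.1 (f.toHom.map_adj hvw)
    by_cases hv : f v ∈ A <;> by_cases hw : f w ∈ A <;> simp only [g, hv, hw, if_true, if_false]
    · exact hA hv hw
    · exact ((hτA _).2 _ hv).symm
    · exact (hτA _).2 _ hw
    · have hcls : ℓ (f v) / 2 = ℓ (f w) / 2 := (hAc hv hw).2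
      have hrep_eq : rep v = rep w := congrArg (Function.invFun cls) hcls
      have : ℓ (f v) ≠ ℓ (f w) := fun h => hne (hℓ (hmem v hv) (hmem w hw) h)
      rw [hrep_eq]
      by_cases hpv : ℓ (f v) % 2 = 0
      · have hpw : ¬ ℓ (f w) % 2 = 0 := by omega
        simpa [hpv, hpw] using hτadj (rep w)
      · have hpw : ℓ (f w) % 2 = 0 := by omega
        simpa [hpv, hpw] using (hτadj (rep w)).symm
  · by_cases hv : f v ∈ A <;> by_cases hw : f w ∈ A <;>
      simp only [g, hv, hw, if_true, if_false] at hvw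
    · exact f.injective hvw
    · exact absurd (hvw ▸ hv) (hτA _).1
    · exact absurd (hvw ▸ hw) (hτA _).1
    · obtain ⟨hr, hp⟩ := Prod.mk.inj (hτ hvw)
      have hcls : cls v = cls w := by rw [← hrep v, ← hrep w, hr]
      have : ℓ (f v) = ℓ (f w) := by
        simp only [cls, decide_eq_decide] at hcls hp
        omega
      exact f.injective (hℓ (hmem v hv) (hmem w hw) this)

end Transfer

namespace IsMatchingOff

variable [Fintype V] [DecidableEq V] {G : SimpleGraph V} [DecidableRel G.Adj] {A : Finset V}

lemma two_mul_eCount_induce_compl_le (hG : IsMatchingOff G A) :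
    2 * eCount (G.induce ↑Aᶜ) ≤ #Aᶜ := by
  classical
  rw [eCount_eq_card_edgeFinset, ← sum_degrees_eq_twice_card_edges]
  calc ∑ v, (G.induce ↑Aᶜ).degree v ≤ ∑ _v : ↥(↑Aᶜ : Set V), 1 := by
        refine sum_le_sum fun v _ => ?_
        rw [← card_neighborFinset_eq_degree, card_le_one]
        intro x hx y hy
        rw [mem_neighborFinset, comap_adj, Function.Embedding.subtype_apply] at hx hy
        have hv := v.2
        have hx' := x.2
        have hy' := y.2
        simp only [coe_compl, Set.mem_compl_iff, mem_coe] at hv hx' hy'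
        exact Subtype.ext (hG hv hx' hy' hx hy)
    _ = #Aᶜ := by simp

/-- Edges of `G - A` with an endpoint `v` missing some `a ∈ A` are injected into the non-edges
`(a, v)` between `A` and `Aᶜ`, since in a matching `v` determines its edge. -/
lemma eCount_le (hG : IsMatchingOff G A) :
    eCount G ≤ eCount (G.induce ↑A) + #A * #Aᶜ +
      #(G.edgeFinset ∩ {v ∈ Aᶜ | ∀ a ∈ A, G.Adj v a}.sym2) := by
  set S := {v ∈ Aᶜ | ∀ a ∈ A, G.Adj v a}
  have hbad : #((G.edgeFinset ∩ Aᶜ.sym2) \ S.sym2) ≤ #((A ×ˢ Aᶜ) \ G.interedges A Aᶜ) := by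
    refine card_le_card_of_forall_subsingleton (fun e p => p.2 ∈ e) (fun e he => ?_) ?_
    · simp only [mem_sdiff, mem_inter, mem_sym2_iff, S, mem_filter, not_forall] at he
      obtain ⟨⟨-, hAc⟩, v, hv, hvS⟩ := he
      obtain ⟨a, ha, hva⟩ : ∃ a ∈ A, ¬ G.Adj v a := by simpa [hAc v hv] using hvS
      refine ⟨(a, v), ?_, hv⟩
      simp only [mem_sdiff, mem_product, mem_interedges_iff]
      exact ⟨⟨ha, hAc v hv⟩, fun h => hva h.2.2.symm⟩
    · rintro p - e ⟨he, hpe⟩ e' ⟨he', hpe'⟩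
      simp only [mem_sdiff, mem_inter, mem_edgeFinset] at he he'
      exact hG.eq_of_mem_of_mem he.1.1 he'.1.1 he.1.2 he'.1.2 hpe hpe'
  have hgood : #((G.edgeFinset ∩ Aᶜ.sym2) ∩ S.sym2) ≤ #(G.edgeFinset ∩ S.sym2) :=
    card_le_card (inter_subset_inter_right inter_subset_left)
  have hcross : #((A ×ˢ Aᶜ) \ G.interedges A Aᶜ) + #(G.interedges A Aᶜ) = #A * #Aᶜ := by
    have hsub : G.interedges A Aᶜ ⊆ A ×ˢ Aᶜ := filter_subset _ _
    rw [card_sdiff_add_card_eq_card hsub, card_product]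
  have := card_sdiff_add_card_inter (G.edgeFinset ∩ Aᶜ.sym2) S.sym2
  rw [eCount_eq_induce_add_interedges_add_induce G A, eCount_induce_eq_card_inter_sym2 G Aᶜ]
  omega

lemma exists_injective_endpoints (hG : IsMatchingOff G A) {S : Finset V} (hS : S ⊆ Aᶜ)
    {ι : Type*} [Fintype ι] (hcard : Fintype.card ι ≤ #(G.edgeFinset ∩ S.sym2)) :
    ∃ τ : ι × Bool → V, Function.Injective τ ∧ (∀ i, G.Adj (τ (i, true)) (τ (i, false))) ∧
      ∀ p, τ p ∈ S := by
  obtain ⟨ψ⟩ :=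
    Function.Embedding.nonempty_of_card_le (hcard.trans_eq (Fintype.card_coe _).symm)
  have hψ : ∀ i, (ψ i : Sym2 V) ∈ G.edgeSet ∧ (ψ i : Sym2 V) ∈ S.sym2 := fun i => by
    simpa only [mem_inter, mem_edgeFinset] using (ψ i).2
  let τ : ι × Bool → V := fun p =>
    if p.2 then (ψ p.1 : Sym2 V).out.1 else (ψ p.1 : Sym2 V).out.2
  have hτ_mem : ∀ p, τ p ∈ (ψ p.1 : Sym2 V) := by
    rintro ⟨i, _ | _⟩
    · exact Sym2.out_snd_mem _
    · exact Sym2.out_fst_mem _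
  have hτ_adj : ∀ i, G.Adj (τ (i, true)) (τ (i, false)) := by
    intro i
    have := (hψ i).1
    rwa [← Quot.out_eq (ψ i : Sym2 V)] at this
  refine ⟨τ, fun p p' h => ?_, hτ_adj, fun p => mem_sym2_iff.1 (hψ p.1).2 _ (hτ_mem p)⟩
  have hS2 := sym2_mono hS
  have hi : p.1 = p'.1 := ψ.injective <| Subtype.ext <| hG.eq_of_mem_of_mem (hψ _).1 (hψ _).1
    (hS2 (hψ _).2) (hS2 (hψ _).2) (hτ_mem p) (h ▸ hτ_mem p')
  obtain ⟨i, b⟩ := p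
  obtain ⟨i', b'⟩ := p'
  obtain rfl : i = i' := hi
  cases b <;> cases b'
  · rfl
  · exact absurd h (hτ_adj i).ne.symm
  · exact absurd h (hτ_adj i).ne
  · rfl

lemma exists_injective_endpoints_of_le (hG : IsMatchingOff G A) {ι : Type*} [Fintype ι]
    (hle : eCount (G.induce ↑A) + #A * #Aᶜ + Fintype.card ι ≤ eCount G) :
    ∃ τ : ι × Bool → V, Function.Injective τ ∧ (∀ i, G.Adj (τ (i, true)) (τ (i, false))) ∧
      ∀ p, τ p ∉ A ∧ ∀ a ∈ A, G.Adj (τ p) a := by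
  have := hG.eCount_le
  obtain ⟨τ, hτ, hτadj, hτS⟩ := hG.exists_injective_endpoints (ι := ι)
    (S := {v ∈ Aᶜ | ∀ a ∈ A, G.Adj v a}) (filter_subset _ _) (by omega)
  exact ⟨τ, hτ, hτadj, fun p => by simpa using hτS p⟩

lemma adj_and_eCount_induce_compl_of_le (hG : IsMatchingOff G A)
    (hle : eCount (G.induce ↑A) + #A * #Aᶜ + #Aᶜ / 2 ≤ eCount G) :
    (∀ v ∉ A, ∀ a ∈ A, G.Adj v a) ∧ eCount (G.induce ↑Aᶜ) = #Aᶜ / 2 := by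
  have hsub : G.interedges A Aᶜ ⊆ A ×ˢ Aᶜ := filter_subset _ _
  have hcross := card_le_card hsub
  have hmatch := hG.two_mul_eCount_induce_compl_le
  rw [eCount_eq_induce_add_interedges_add_induce G A] at hle
  rw [card_product] at hcross
  refine ⟨fun v hv a ha => ?_, by omega⟩
  have hfull : G.interedges A Aᶜ = A ×ˢ Aᶜ :=
    eq_of_subset_of_card_le hsub (by rw [card_product]; omega)
  have : (a, v) ∈ G.interedges A Aᶜ := hfull ▸ mem_product.2 ⟨ha, mem_compl.2 hv⟩
  exact ((G.mem_interedges_iff.1 this).2.2).symm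

end IsMatchingOff

end

theorem extremal_structure_sigma_infinite_general {VF : Type*} [Fintype VF]
    (F : SimpleGraph VF) (k n : ℕ) (hk : 2 ≤ k)
    (hσ : ∀ m : ℕ, ¬ GContains (joinIM (Fintype.card VF) m) F)
    (hn : 9 * (k ^ 2 + k + 1) + 2 * Fintype.card VF ≤ n)
    (G : SimpleGraph (Fin n))
    (hfree : ¬ GContains G (kPaths k 3) ∧ ¬ GContains G F)
    (hext : eCount G =
      exNum n (fun G' => ¬ GContains G' (kPaths k 3) ∧ ¬ GContains G' F))
    (A : Finset (Fin n)) (hA : A.card = k - 1)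
    (hdeg : ∀ v ∈ A, (n : ℚ) / 9 ≤ ((G.neighborSet v).ncard : ℚ)) :
    (∀ v : Fin n, v ∉ A → ∀ a ∈ A, G.Adj v a) ∧
      eCount (G.induce (↑A : Set (Fin n))ᶜ) = (n - k + 1) / 2 := by
  classical
  simp only [gContains_iff_isContained] at hσ hfree hext
  obtain ⟨hPfree, hFfree⟩ := hfree
  have hmax : ∀ H, ¬ kPaths k 3 ⊑ H → ¬ F ⊑ H → eCount H ≤ eCount G :=
    fun H hP hF => hext ▸ eCount_le_exNum (P := fun H => ¬ kPaths k 3 ⊑ H ∧ ¬ F ⊑ H) ⟨hP, hF⟩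
  have hAk : #A + 1 = k := by omega
  have hAc : #Aᶜ = n - k + 1 := by rw [card_compl, Fintype.card_fin]; omega
  have hmatch : IsMatchingOff G A := by
    refine isMatchingOff_of_kPaths_free (fun a ha => ?_) (hAk ▸ hPfree)
    have h := hdeg a ha
    rw [Set.ncard_eq_toFinset_card', ← neighborFinset_def, card_neighborFinset_eq_degree,
      div_le_iff₀ (by norm_num)] at h
    have : n ≤ G.degree a * 9 := by exact_mod_cast h
    nlinarith
  obtain ⟨ℓ, hℓ, hℓlt, hℓcount⟩ := exists_labelling_eCount_induce_pairGraph Aᶜ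
  have hPjoin : ∀ D, ¬ kPaths k 3 ⊑ joinOn A D (pairGraph ℓ) := fun D =>
    kPaths_free_of_isMatchingOff (isMatchingOff_joinOn_pairGraph hℓ) (by omega)
  have hlow : #A * #Aᶜ + #Aᶜ / 2 ≤ eCount G := by
    have := hmax _ (hPjoin ⊥) fun h => hσ #Aᶜ <| isContained_joinIM_of_isContained_joinOn_bot hℓ
      (fun v hv => (hℓlt v (mem_compl.2 hv)).trans_le (by omega)) h
    simpa [eCount_joinOn, hℓcount] using this
  have hA_edges : eCount (G.induce ↑A) ≤ k ^ 2 :=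
    (eCount_induce_le_sq G A).trans (Nat.pow_le_pow_left (by omega) 2)
  obtain ⟨τ, hτ, hτadj, hτA⟩ :=
    hmatch.exists_injective_endpoints_of_le (ι := VF) (by omega)
  have hup := hmax _ (hPjoin G) fun h => hFfree <| isContained_of_isContained_joinOn_self hℓ hτ
    hτadj hτA h
  rw [eCount_joinOn, hℓcount] at hup
  obtain ⟨hadj, hcount⟩ := hmatch.adj_and_eCount_induce_compl_of_le hup
  exact ⟨hadj, by rw [← coe_compl, hcount, hAc]⟩

/-- Lemma 3.2: structure of an extremal `{kP₃, F}`-free graph when `σ(F) = ∞`. -/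
theorem extremal_structure_sigma_infinite {VF : Type*} [Fintype VF]
    (F : SimpleGraph VF) (k n : ℕ) (hk : 2 ≤ k)
    (hχ : 3 ≤ F.chromaticNumber)
    (hσ : ∀ m : ℕ, ¬ GContains (joinIM (Fintype.card VF) m) F)
    (hn : 9 * (k ^ 2 + k + 1) + 2 * Fintype.card VF ≤ n)
    (G : SimpleGraph (Fin n))
    (hfree : ¬ GContains G (kPaths k 3) ∧ ¬ GContains G F)
    (hext : eCount G =
      exNum n (fun G' => ¬ GContains G' (kPaths k 3) ∧ ¬ GContains G' F))
    (A : Finset (Fin n)) (hA : A.card = k - 1)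
    (hdeg : ∀ v ∈ A, (n : ℚ) / 9 ≤ ((G.neighborSet v).ncard : ℚ)) :
    (∀ v : Fin n, v ∉ A → ∀ a ∈ A, G.Adj v a) ∧
      eCount (G.induce (↑A : Set (Fin n))ᶜ) = (n - k + 1) / 2 :=
  extremal_structure_sigma_infinite_general F k n hk hσ hn G hfree hext A hA hdeg
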